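/- arXiv:2104.14172 — 2 statements merged into one kernel-verified Lean document; each statement's English description precedes it below -/
import Mathlib

section
/- If v is a simplicial vertex of a finite simple graph G (i.e., the induced subgraph on the neighborhood of v is a clique), then A(G) > A(G − v). -/
open Finset

/-- A partition of the vertex set of `G` into independent (stable) sets. -/
def IsStablePartition {V : Type*} [Fintype V] [DecidableEq V] (G : SimpleGraph V)
    (P : Finpartition (Finset.univ : Finset V)) : Prop :=
  ∀ p ∈ P.parts, ∀ u ∈ p, ∀ v ∈ p, ¬ G.Adj u v

/-- `colS G k` : number of non-equivalent colorings of `G` with exactly `k` colors. -/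
noncomputable def colS {V : Type*} [Fintype V] [DecidableEq V] (G : SimpleGraph V) (k : ℕ) : ℕ :=
  Set.ncard {P : Finpartition (Finset.univ : Finset V) |
    IsStablePartition G P ∧ P.parts.card = k}

/-- `colB G` : total number of non-equivalent colorings of `G`. -/
noncomputable def colB {V : Type*} [Fintype V] [DecidableEq V] (G : SimpleGraph V) : ℕ :=
  ∑ k ∈ Finset.range (Fintype.card V + 1), colS G k

/-- `colT G` : total number of color classes over all non-equivalent colorings of `G`. -/
noncomputable def colT {V : Type*} [Fintype V] [DecidableEq V] (G : SimpleGraph V) : ℕ :=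
  ∑ k ∈ Finset.range (Fintype.card V + 1), k * colS G k

/-- `colA G` : average number of colors in the non-equivalent colorings of `G`. -/
noncomputable def colA {V : Type*} [Fintype V] [DecidableEq V] (G : SimpleGraph V) : ℚ :=
  (colT G : ℚ) / (colB G : ℚ)

/-- Disjoint union of two graphs. -/
def graphUnion {V W : Type*} (G : SimpleGraph V) (H : SimpleGraph W) : SimpleGraph (V ⊕ W) where
  Adj a b := match a, b with
    | Sum.inl x, Sum.inl y => G.Adj x y
    | Sum.inr x, Sum.inr y => H.Adj x y
    | _, _ => False
  symm := ⟨by rintro (x|x) (y|y) h <;> first | exact h.symm | exact h.elim⟩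
  loopless := ⟨by rintro (x|x) h <;> first | exact G.loopless.irrefl x h | exact H.loopless.irrefl x h⟩

/-- Join of two graphs: disjoint union plus all cross edges. -/
def graphJoin {V W : Type*} (G : SimpleGraph V) (H : SimpleGraph W) : SimpleGraph (V ⊕ W) where
  Adj a b := match a, b with
    | Sum.inl x, Sum.inl y => G.Adj x y
    | Sum.inr x, Sum.inr y => H.Adj x y
    | _, _ => True
  symm := ⟨by rintro (x|x) (y|y) h <;> first | exact h.symm | trivial⟩
  loopless := ⟨by rintro (x|x) h <;> first | exact G.loopless.irrefl x h | exact H.loopless.irrefl x h⟩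

/-- Deletion of a vertex. -/
def deleteVertex {V : Type*} (G : SimpleGraph V) (v : V) : SimpleGraph {x : V // x ≠ v} :=
  G.induce {x : V | x ≠ v}


/-!
Restriction to `G - v` maps the stable partitions of `G` onto those of `G - v`. The fibre over a
stable partition `Q` of `G - v` has `w Q = f Q + 1` elements, where `f Q` counts the blocks of `Q`
without a neighbour of `v`: the vertex `v` either joins one of those blocks (giving `|Q|` blocks) or
forms a new block (giving `|Q| + 1`). Hence `B(G) = ∑ w Q` and `T(G) = ∑ (w Q * |Q| + 1)`.
If `v` is simplicial, its neighbours lie in pairwise distinct blocks of `Q`, so `f Q = |Q| - deg v`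
and the weights `w Q` grow with `|Q|`. Chebyshev's sum inequality then bounds the weighted average
`∑ w Q * |Q| / ∑ w Q` below by the plain average `A(G - v)`, and the extra `+ 1` per `Q` in `T(G)`
makes the inequality strict.
-/

namespace Finset

variable {α : Type*}

@[simp]
lemma subtype_map_subtype {p : α → Prop} [DecidablePred p] (s : Finset (Subtype p)) :
    (s.map (.subtype p)).subtype p = s := by
  ext ⟨a, ha⟩
  simp [ha]

lemma subtype_insert_of_neg [DecidableEq α] {p : α → Prop} [DecidablePred p] {a : α} (ha : ¬p a)
    (s : Finset α) : (insert a s).subtype p = s.subtype p := by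
  ext ⟨b, hb⟩
  simp [show b ≠ a from fun h => ha (h ▸ hb)]

lemma sum_insert_empty_card_erase_add_one [DecidableEq α] {s N : Finset (Finset α)} (hs : ∅ ∉ s)
    (hN : N ⊆ s) : ∑ t ∈ insert ∅ N, (#(s.erase t) + 1) = (#N + 1) * #s + 1 := by
  rw [sum_insert fun h => hs (hN h), erase_eq_of_notMem hs,
    sum_congr rfl fun t ht => card_erase_add_one (hN ht), sum_const, smul_eq_mul]
  ring

lemma sum_div_card_lt_of_monovaryOn {ι K : Type*} [Field K] [LinearOrder K]
    [IsStrictOrderedRing K] {s : Finset ι} (hs : s.Nonempty) {c w : ι → K}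
    (hw : ∀ i ∈ s, 0 < w i) (hcw : MonovaryOn c w s) :
    (∑ i ∈ s, c i) / #s < (∑ i ∈ s, (w i * c i + 1)) / ∑ i ∈ s, w i := by
  have hcard : (0 : K) < #s := Nat.cast_pos.2 hs.card_pos
  rw [div_lt_div_iff₀ hcard (sum_pos hw hs), sum_add_distrib, sum_const, nsmul_one]
  have hchebyshev := hcw.sum_mul_sum_le_card_mul_sum
  simp only [mul_comm (c _)] at hchebyshev
  nlinarith

end Finset

namespace Finpartition

variable {V : Type*} [Fintype V] [DecidableEq V] (v : V)

def eraseVertex (P : Finpartition (univ : Finset V)) :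
    Finpartition (univ : Finset {x // x ≠ v}) :=
  ofErase (P.parts.image (Finset.subtype (· ≠ v)))
    (by
      rw [supIndep_iff_pairwiseDisjoint, coe_image]
      rintro _ ⟨p, hp, rfl⟩ _ ⟨q, hq, rfl⟩ hne
      refine (disjoint_map (.subtype _)).1 ?_
      simpa only [id, subtype_map] using
        (P.disjoint hp hq (ne_of_apply_ne _ hne)).mono (filter_subset (· ≠ v) p)
          (filter_subset (· ≠ v) q))
    (eq_univ_of_forall fun x => by
      obtain ⟨p, hp, hxp⟩ := P.exists_mem (mem_univ x.1)
      exact mem_sup.2 ⟨_, mem_image_of_mem _ hp, mem_subtype.2 hxp⟩)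

lemma mem_eraseVertex_parts {P : Finpartition (univ : Finset V)} {q : Finset {x // x ≠ v}} :
    q ∈ (P.eraseVertex v).parts ↔ q ≠ ∅ ∧ ∃ p ∈ P.parts, p.subtype (· ≠ v) = q := by
  simp [eraseVertex]

/-- `v` is added to the block `t` of `Q`, or as a new singleton block when `t = ∅`. -/
def insertVertex (Q : Finpartition (univ : Finset {x // x ≠ v})) (t : Finset {x // x ≠ v})
    (ht : t = ∅ ∨ t ∈ Q.parts) : Finpartition (univ : Finset V) where
  parts := insert (insert v (t.map (.subtype _))) ((Q.parts.erase t).image (·.map (.subtype _)))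
  supIndep := by
    rw [supIndep_iff_pairwiseDisjoint, coe_insert, coe_image]
    refine .insert ?_ ?_
    · rintro _ ⟨q, hq, rfl⟩ _ ⟨r, hr, rfl⟩ hne
      exact (disjoint_map _).2 (Q.disjoint (mem_of_mem_erase hq) (mem_of_mem_erase hr)
        (ne_of_apply_ne _ hne))
    · rintro _ ⟨q, hq, rfl⟩ -
      refine disjoint_insert_left.2 ⟨notMem_map_subtype_of_not_property _ (not_not.2 rfl),
        (disjoint_map _).2 ?_⟩
      rcases ht with rfl | ht
      · exact disjoint_empty_left _
      · exact Q.disjoint ht (mem_of_mem_erase hq) (ne_of_mem_erase hq).symm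
  sup_parts := eq_univ_of_forall fun x => by
    rw [mem_sup]
    by_cases hx : x = v
    · exact ⟨_, mem_insert_self _ _, mem_insert.2 (.inl hx)⟩
    obtain ⟨q, hq, hxq⟩ := Q.exists_mem (mem_univ (⟨x, hx⟩ : {x // x ≠ v}))
    by_cases hqt : q = t
    · exact ⟨_, mem_insert_self _ _, mem_insert_of_mem (mem_map_of_mem _ (hqt ▸ hxq))⟩
    · exact ⟨_, mem_insert_of_mem (mem_image_of_mem _ (mem_erase.2 ⟨hqt, hq⟩)),
        mem_map_of_mem _ hxq⟩
  bot_notMem := by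
    simp only [bot_eq_empty, mem_insert, mem_image, map_eq_empty, not_or, not_exists, not_and]
    exact ⟨(insert_ne_empty _ _).symm, fun q hq => Q.ne_empty (mem_of_mem_erase hq)⟩

section insertVertex

variable (Q : Finpartition (univ : Finset {x // x ≠ v})) (t : Finset {x // x ≠ v})
  (ht : t = ∅ ∨ t ∈ Q.parts)

lemma card_parts_insertVertex : #(Q.insertVertex v t ht).parts = #(Q.parts.erase t) + 1 := by
  refine (card_insert_of_notMem fun hmem => ?_).trans
    (congrArg (· + 1) (card_image_of_injective _ (map_injective _)))
  obtain ⟨q, -, hq⟩ := mem_image.1 hmem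
  exact notMem_map_subtype_of_not_property q (not_not.2 rfl) (hq ▸ mem_insert_self v _)

lemma subtype_part_insertVertex_self : ((Q.insertVertex v t ht).part v).subtype (· ≠ v) = t := by
  rw [(Q.insertVertex v t ht).part_eq_of_mem (mem_insert_self _ _) (mem_insert_self _ _),
    subtype_insert_of_neg (p := (· ≠ v)) (not_not.2 rfl), subtype_map_subtype]

lemma eraseVertex_insertVertex : (Q.insertVertex v t ht).eraseVertex v = Q := by
  ext q
  simp only [mem_eraseVertex_parts, insertVertex, exists_mem_insert, exists_mem_image,
    subtype_insert_of_neg (p := (· ≠ v)) (not_not.2 rfl), subtype_map_subtype, exists_eq_right,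
    mem_erase]
  constructor
  · rintro ⟨hq, rfl | ⟨-, hqQ⟩⟩
    · exact ht.resolve_left hq
    · exact hqQ
  · intro hq
    exact ⟨Q.ne_empty hq, (eq_or_ne t q).imp id fun hqt => ⟨hqt.symm, hq⟩⟩

end insertVertex

lemma subtype_part_eq_empty_or_mem (P : Finpartition (univ : Finset V)) :
    (P.part v).subtype (· ≠ v) = ∅ ∨ (P.part v).subtype (· ≠ v) ∈ (P.eraseVertex v).parts := by
  by_cases h : (P.part v).subtype (· ≠ v) = ∅
  · exact .inl h
  · exact .inr ((mem_eraseVertex_parts v).2 ⟨h, _, P.part_mem.2 (mem_univ v), rfl⟩)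

lemma insertVertex_eraseVertex (P : Finpartition (univ : Finset V)) :
    (P.eraseVertex v).insertVertex v _ (P.subtype_part_eq_empty_or_mem v) = P := by
  have hvP : v ∈ P.part v := P.mem_part_self.2 (mem_univ v)
  have hv_notMem {p} (hp : p ∈ P.parts) (hne : p ≠ P.part v) : v ∉ p :=
    fun hvp => hne (P.part_eq_of_mem hp hvp).symm
  ext r
  simp only [insertVertex, ne_eq, subtype_map, filter_ne', insert_erase hvP, mem_insert,
    mem_image, mem_erase, mem_eraseVertex_parts, ↓existsAndEq, and_true]
  constructor
  · rintro (rfl | ⟨p, ⟨hpt, -, hp⟩, rfl⟩)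
    · exact P.part_mem.2 (mem_univ v)
    · rwa [erase_eq_of_notMem (hv_notMem hp (fun h => hpt (h ▸ rfl)))]
  · refine fun hr => or_iff_not_imp_left.2 fun hne => ?_
    obtain ⟨x, hx⟩ := P.nonempty_of_mem_parts hr
    have hxv : x ≠ v := fun h => hv_notMem hr hne (h ▸ hx)
    have hx' : (⟨x, hxv⟩ : {x // x ≠ v}) ∈ r.subtype (· ≠ v) := mem_subtype.2 hx
    refine ⟨r, ⟨fun h => ?_, ne_empty_of_mem hx', hr⟩, erase_eq_of_notMem (hv_notMem hr hne)⟩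
    rw [h, mem_subtype] at hx'
    exact hne (P.eq_of_mem_parts hr (P.part_mem.2 (mem_univ v)) hx hx')

lemma card_parts_mem_range (P : Finpartition (univ : Finset V)) :
    #P.parts ∈ range (Fintype.card V + 1) :=
  mem_range_succ_iff.2 P.card_parts_le_card

end Finpartition

section StablePartitions

variable {V : Type*} [Fintype V] [DecidableEq V] (G : SimpleGraph V)

open Classical in
noncomputable def stablePartitions : Finset (Finpartition (univ : Finset V)) :=
  univ.filter (IsStablePartition G)

variable {G}

@[simp]
lemma mem_stablePartitions {P : Finpartition (univ : Finset V)} :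
    P ∈ stablePartitions G ↔ IsStablePartition G P := by
  simp [stablePartitions]

lemma isStablePartition_bot : IsStablePartition G ⊥ := by
  intro p hp u hu w hw
  obtain ⟨a, -, rfl⟩ := Finpartition.mem_bot_iff.1 hp
  rw [mem_singleton] at hu hw
  exact hu ▸ hw ▸ G.loopless.irrefl a

variable (G)

lemma colS_eq_card_filter (k : ℕ) : colS G k = #{P ∈ stablePartitions G | #P.parts = k} := by
  rw [colS, ← Set.ncard_coe_finset]
  congr 1
  ext P
  simp

lemma colB_eq_card_stablePartitions : colB G = #(stablePartitions G) := by
  rw [colB, card_eq_sum_card_fiberwise fun P _ => Finpartition.card_parts_mem_range P]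
  simp only [colS_eq_card_filter]

lemma colT_eq_sum_card_parts : colT G = ∑ P ∈ stablePartitions G, #P.parts := by
  rw [colT, ← sum_fiberwise_of_maps_to fun P _ => Finpartition.card_parts_mem_range P]
  refine sum_congr rfl fun k _ => ?_
  rw [colS_eq_card_filter, sum_const_nat fun P hP => (mem_filter.1 hP).2, mul_comm]

end StablePartitions

section DeleteVertex

variable {V : Type*} [Fintype V] [DecidableEq V] {G : SimpleGraph V} {v : V}

lemma IsStablePartition.eraseVertex {P : Finpartition (univ : Finset V)}
    (hP : IsStablePartition G P) : IsStablePartition (deleteVertex G v) (P.eraseVertex v) := by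
  intro q hq u hu w hw
  obtain ⟨-, p, hp, rfl⟩ := (Finpartition.mem_eraseVertex_parts v).1 hq
  exact hP p hp u (mem_subtype.1 hu) w (mem_subtype.1 hw)

lemma IsStablePartition.insertVertex {Q : Finpartition (univ : Finset {x // x ≠ v})}
    {t : Finset {x // x ≠ v}} {ht : t = ∅ ∨ t ∈ Q.parts}
    (hQ : IsStablePartition (deleteVertex G v) Q) (htv : ∀ x ∈ t, ¬ G.Adj v x) :
    IsStablePartition G (Q.insertVertex v t ht) := by
  have hlift {q} (hq : q = ∅ ∨ q ∈ Q.parts) :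
      ∀ a ∈ q.map (.subtype _), ∀ b ∈ q.map (.subtype _), ¬ G.Adj a b := by
    simp only [mem_map, Function.Embedding.coe_subtype]
    rintro _ ⟨a, ha, rfl⟩ _ ⟨b, hb, rfl⟩
    rcases hq with rfl | hq
    · exact absurd ha (notMem_empty a)
    · exact hQ q hq a ha b hb
  intro p hp
  rcases mem_insert.1 hp with rfl | hp
  · intro u hu w hw huw
    rcases mem_insert.1 hu with rfl | hu <;> rcases mem_insert.1 hw with rfl | hw
    · exact G.loopless.irrefl _ huw
    · obtain ⟨b, hb, rfl⟩ := mem_map.1 hw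
      exact htv b hb huw
    · obtain ⟨a, ha, rfl⟩ := mem_map.1 hu
      exact htv a ha huw.symm
    · exact hlift ht u hu w hw huw
  · obtain ⟨q, hq, rfl⟩ := mem_image.1 hp
    exact hlift (.inr (mem_of_mem_erase hq))

variable (G v) in
open Classical in
noncomputable def nonadjBlocks (Q : Finpartition (univ : Finset {x // x ≠ v})) :
    Finset (Finset {x // x ≠ v}) :=
  Q.parts.filter fun q => ∀ x ∈ q, ¬ G.Adj v x

lemma mem_nonadjBlocks {Q : Finpartition (univ : Finset {x // x ≠ v})} {q : Finset {x // x ≠ v}} :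
    q ∈ nonadjBlocks G v Q ↔ q ∈ Q.parts ∧ ∀ x ∈ q, ¬ G.Adj v x := by
  simp [nonadjBlocks]

lemma nonadjBlocks_subset (Q : Finpartition (univ : Finset {x // x ≠ v})) :
    nonadjBlocks G v Q ⊆ Q.parts :=
  fun _ hq => (mem_nonadjBlocks.1 hq).1

lemma mem_insert_nonadjBlocks {Q : Finpartition (univ : Finset {x // x ≠ v})}
    {t : Finset {x // x ≠ v}} :
    t ∈ insert ∅ (nonadjBlocks G v Q) ↔ (t = ∅ ∨ t ∈ Q.parts) ∧ ∀ x ∈ t, ¬ G.Adj v x := by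
  by_cases ht : t = ∅ <;> simp [mem_nonadjBlocks, ht]

lemma sum_stablePartitions_eq_sum_insertVertex {M : Type*} [AddCommMonoid M]
    (f : Finpartition (univ : Finset V) → M)
    (g : Finpartition (univ : Finset {x // x ≠ v}) → Finset {x // x ≠ v} → M)
    (hfg : ∀ Q t ht, f (Q.insertVertex v t ht) = g Q t) :
    ∑ P ∈ stablePartitions G, f P =
      ∑ Q ∈ stablePartitions (deleteVertex G v), ∑ t ∈ insert ∅ (nonadjBlocks G v Q), g Q t := by
  rw [sum_sigma']
  refine sum_bij' (fun P _ => ⟨P.eraseVertex v, (P.part v).subtype (· ≠ v)⟩)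
    (fun x hx => x.1.insertVertex v x.2 (mem_insert_nonadjBlocks.1 (mem_sigma.1 hx).2).1)
    (fun P hP => ?_) (fun x hx => ?_) (fun P _ => P.insertVertex_eraseVertex v)
    (fun x _ => ?_) (fun P _ => ?_)
  · rw [mem_stablePartitions] at hP
    have hvP : v ∈ P.part v := P.mem_part_self.2 (mem_univ v)
    refine mem_sigma.2 ⟨mem_stablePartitions.2 hP.eraseVertex,
      mem_insert_nonadjBlocks.2 ⟨P.subtype_part_eq_empty_or_mem v, fun x hx => ?_⟩⟩
    exact hP _ (P.part_mem.2 (mem_univ v)) v hvP x (mem_subtype.1 hx)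
  · obtain ⟨hQ, ht⟩ := mem_sigma.1 hx
    exact mem_stablePartitions.2
      ((mem_stablePartitions.1 hQ).insertVertex (mem_insert_nonadjBlocks.1 ht).2)
  · exact Sigma.ext (x.1.eraseVertex_insertVertex v x.2 _)
      (heq_of_eq (x.1.subtype_part_insertVertex_self v x.2 _))
  · rw [← hfg _ _ (P.subtype_part_eq_empty_or_mem v)]
    exact congrArg f (P.insertVertex_eraseVertex v).symm

variable (G v) in
lemma colB_eq_sum_deleteVertex :
    colB G = ∑ Q ∈ stablePartitions (deleteVertex G v), (#(nonadjBlocks G v Q) + 1) := by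
  rw [colB_eq_card_stablePartitions, card_eq_sum_ones,
    sum_stablePartitions_eq_sum_insertVertex _ (fun _ _ => 1) fun _ _ _ => rfl]
  refine sum_congr rfl fun Q _ => ?_
  rw [sum_const, smul_eq_mul, mul_one,
    card_insert_of_notMem fun h => Q.empty_notMem_parts (nonadjBlocks_subset Q h)]

variable (G v) in
lemma colT_eq_sum_deleteVertex :
    colT G = ∑ Q ∈ stablePartitions (deleteVertex G v),
      ((#(nonadjBlocks G v Q) + 1) * #Q.parts + 1) := by
  rw [colT_eq_sum_card_parts, sum_stablePartitions_eq_sum_insertVertex (#·.parts)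
    (fun Q t => #(Q.parts.erase t) + 1) (Finpartition.card_parts_insertVertex v)]
  exact sum_congr rfl fun Q _ =>
    sum_insert_empty_card_erase_add_one Q.empty_notMem_parts (nonadjBlocks_subset Q)

lemma card_nonadjBlocks_add_degree [DecidableRel G.Adj] (hv : G.IsClique (G.neighborSet v))
    {Q : Finpartition (univ : Finset {x // x ≠ v})}
    (hQ : IsStablePartition (deleteVertex G v) Q) :
    #(nonadjBlocks G v Q) + G.degree v = #Q.parts := by
  rw [← card_sdiff_add_card_eq_card (nonadjBlocks_subset (G := G) Q), add_comm,
    ← G.card_neighborFinset_eq_degree]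
  congr 1
  have hN (a : V) : a ∈ G.neighborFinset v ↔ G.Adj v a := G.mem_neighborFinset v a
  have hQpart (a : {x // x ≠ v}) : Q.part a ∈ Q.parts := Q.part_mem.2 (mem_univ a)
  have hmem (a : {x // x ≠ v}) : a ∈ Q.part a := Q.mem_part_self.2 (mem_univ a)
  refine card_bij (fun a ha => Q.part ⟨a, (G.ne_of_adj ((hN a).1 ha)).symm⟩)
    (fun a ha => ?_) (fun a ha b hb hab => ?_) (fun q hq => ?_)
  · exact mem_sdiff.2 ⟨hQpart _, fun h => (mem_nonadjBlocks.1 h).2 _ (hmem _) ((hN a).1 ha)⟩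
  · by_contra hab'
    have hadj : G.Adj a b := hv ((hN a).1 ha) ((hN b).1 hb) hab'
    exact hQ _ (hQpart ⟨a, _⟩) _ (hmem _) ⟨b, _⟩ (by rw [hab]; exact hmem _) hadj
  · obtain ⟨hqQ, hqN⟩ := mem_sdiff.1 hq
    have hmeets : ¬ ∀ x ∈ q, ¬ G.Adj v x := fun h => hqN (mem_nonadjBlocks.2 ⟨hqQ, h⟩)
    push Not at hmeets
    obtain ⟨x, hxq, hvx⟩ := hmeets
    exact ⟨x, (hN x).2 hvx, Q.part_eq_of_mem hqQ hxq⟩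

end DeleteVertex

theorem stmt6 {V : Type*} [Fintype V] [DecidableEq V] (G : SimpleGraph V) (v : V)
    (hv : ∀ a ∈ G.neighborSet v, ∀ b ∈ G.neighborSet v, a ≠ b → G.Adj a b) :
    colA G > colA (deleteVertex G v) := by
  classical
  have hmono : MonovaryOn (fun Q => (#Q.parts : ℚ)) (fun Q => (#(nonadjBlocks G v Q) : ℚ) + 1)
      (stablePartitions (deleteVertex G v)) := by
    intro Q hQ R hR hlt
    have hQd := card_nonadjBlocks_add_degree hv (mem_stablePartitions.1 hQ)
    have hRd := card_nonadjBlocks_add_degree hv (mem_stablePartitions.1 hR)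
    have : #(nonadjBlocks G v Q) < #(nonadjBlocks G v R) := by
      exact_mod_cast (add_lt_add_iff_right 1).1 hlt
    exact Nat.cast_le.2 (by omega)
  rw [gt_iff_lt, colA, colA, colT_eq_sum_deleteVertex G v, colB_eq_sum_deleteVertex G v,
    colT_eq_sum_card_parts, colB_eq_card_stablePartitions]
  push_cast
  exact sum_div_card_lt_of_monovaryOn ⟨⊥, mem_stablePartitions.2 isStablePartition_bot⟩
    (fun _ _ => by positivity) hmono
end

section
/- For the path P_n on n ≥ 1 vertices, A(P_n) = B_n / B_{n−1}, where B_m is the mth Bell number (with B_0 = 1). -/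
open Finset

/-- The `n`th Bell number: the number of partitions of an `n`-element set. -/
noncomputable def bell (n : ℕ) : ℕ :=
  Nat.card (Finpartition (Finset.univ : Finset (Fin n)))


/-!
Encode a partition of a finite linear order by its predecessor function, which sends each element
to the previous element of its part (`none` at the minimum of a part); the number of parts is the
number of `none`s. A partition of `P_{m+1}` is stable iff no element has its immediate
neighbour as predecessor, and letting `b + 1` point to `p b` identifies these predecessor
functions with all predecessor functions `p` on `Fin m`, with one extra `none` (at `0`). Hence
`B(P_{m+1}) = B_m` and `T(P_{m+1}) = ∑_{P ⊢ [m]} (|P| + 1)`. The latter sum is `B_{m+1}`: a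
partition of `Fin (m + 1)` is a partition of its last `m` elements together with a choice of
where `0` goes, either as a new singleton part or below the minimum of one of the `|P|` parts.
-/

open Relation SimpleGraph Finpartition

section PrevFun

variable {α : Type*}

/-- `PrevChain p a b`: iterating `p` from `b` passes through `a`. -/
def PrevChain (p : α → Option α) : α → α → Prop :=
  ReflTransGen fun a b => p b = some a

theorem PrevChain.total_of_right {p : α → Option α} {a b c : α} (hac : PrevChain p a c)
    (hbc : PrevChain p b c) : PrevChain p a b ∨ PrevChain p b a := by
  induction hac using ReflTransGen.head_induction_on with
  | refl => exact .inr hbc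
  | head hstep _ ih =>
    rcases ih with h | h
    · exact .inl (.head hstep h)
    · rcases ReflTransGen.cases_tail h with rfl | ⟨d, hbd, hd⟩
      · exact .inl (.single hstep)
      · obtain rfl := Option.some_inj.1 (hd.symm.trans hstep)
        exact .inr hbd

variable [LinearOrder α]

structure IsPrevFun (p : α → Option α) : Prop where
  lt : ∀ {a b}, p a = some b → b < a
  inj : ∀ {a a' b}, p a = some b → p a' = some b → a = a'

namespace IsPrevFun

variable {p : α → Option α}

theorem le_of_prevChain (hp : IsPrevFun p) {a b : α} (h : PrevChain p a b) : a ≤ b := by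
  induction h with
  | refl => exact le_rfl
  | tail _ hstep ih => exact ih.trans (hp.lt hstep).le

theorem prevChain_total_of_left (hp : IsPrevFun p) {a b c : α} (hba : PrevChain p b a)
    (hbc : PrevChain p b c) : PrevChain p a c ∨ PrevChain p c a := by
  induction hba using ReflTransGen.head_induction_on generalizing c with
  | refl => exact .inl hbc
  | head hstep hrest ih =>
    rcases ReflTransGen.cases_head hbc with rfl | ⟨d, hd, hdc⟩
    · exact .inr (.head hstep hrest)
    · exact ih (hp.inj hd hstep ▸ hdc)

def chainSetoid (hp : IsPrevFun p) : Setoid α where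
  r a b := PrevChain p a b ∨ PrevChain p b a
  iseqv.refl _ := .inl .refl
  iseqv.symm h := h.symm
  iseqv.trans := by
    rintro a b c (hab | hba) (hbc | hcb)
    · exact .inl (hab.trans hbc)
    · exact PrevChain.total_of_right hab hcb
    · exact hp.prevChain_total_of_left hba hbc
    · exact .inr (hcb.trans hba)

end IsPrevFun

end PrevFun

namespace Finpartition

theorem part_injective {α : Type*} [DecidableEq α] {s : Finset α} :
    Function.Injective (part : Finpartition s → α → Finset α) := by
  suffices ∀ P Q : Finpartition s, P.part = Q.part → ∀ t ∈ P.parts, t ∈ Q.parts from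
    fun P Q h => Finpartition.ext (Finset.ext fun t => ⟨this P Q h t, this Q P h.symm t⟩)
  intro P Q h t ht
  obtain ⟨a, hat⟩ := P.nonempty_of_mem_parts ht
  rw [← P.part_eq_of_mem ht hat, h]
  exact Q.part_mem.2 (P.le ht hat)

variable {α : Type*} [Fintype α] [DecidableEq α] (P : Finpartition (univ : Finset α))

theorem part_eq_of_mem_part {a b : α} (h : b ∈ P.part a) : P.part b = P.part a :=
  (P.mem_part_iff_part_eq_part (mem_univ _) (mem_univ _)).1 h

theorem mem_part_comm {a b : α} : b ∈ P.part a ↔ a ∈ P.part b := by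
  simp only [P.mem_part_iff_part_eq_part (mem_univ _) (mem_univ _), eq_comm]

variable [LinearOrder α]

def prevInPart (a : α) : Option α :=
  if h : ((P.part a).filter (· < a)).Nonempty then some (((P.part a).filter (· < a)).max' h)
  else none

variable {P}

theorem prevInPart_eq_some_iff {a b : α} :
    P.prevInPart a = some b ↔
      b ∈ P.part a ∧ b < a ∧ ∀ c ∈ P.part a, c < a → c ≤ b := by
  unfold prevInPart
  split_ifs with h
  · simp only [Option.some_inj, max'_eq_iff, mem_filter, and_imp, and_assoc]
  · simp only [false_iff, not_and]
    exact fun hb hba _ => h ⟨b, mem_filter.2 ⟨hb, hba⟩⟩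

theorem prevInPart_eq_none_iff {a : α} :
    P.prevInPart a = none ↔ ∀ c ∈ P.part a, ¬c < a := by
  unfold prevInPart
  split_ifs with h
  · obtain ⟨c, hc⟩ := h
    simp only [false_iff, not_forall, not_not]
    exact ⟨c, (mem_filter.1 hc).1, (mem_filter.1 hc).2⟩
  · simpa [Finset.Nonempty] using h

variable (P)

theorem isPrevFun_prevInPart : IsPrevFun P.prevInPart := by
  have not_lt_of_eq : ∀ {a a' b},
      P.prevInPart a = some b → P.prevInPart a' = some b → ¬a < a' := by
    intro a a' b ha ha' hlt
    obtain ⟨hb, hba, -⟩ := prevInPart_eq_some_iff.1 ha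
    obtain ⟨hb', -, hmax'⟩ := prevInPart_eq_some_iff.1 ha'
    rw [P.mem_part_comm, P.part_eq_of_mem_part hb'] at hb
    exact (hmax' a hb hlt).not_gt hba
  exact ⟨fun h => (prevInPart_eq_some_iff.1 h).2.1,
    fun ha ha' => le_antisymm (not_lt.1 (not_lt_of_eq ha' ha)) (not_lt.1 (not_lt_of_eq ha ha'))⟩

theorem mem_part_of_prevChain {a b : α} (h : PrevChain P.prevInPart a b) : b ∈ P.part a := by
  induction h with
  | refl => exact P.mem_part (mem_univ _)
  | tail _ hstep ih =>
    rw [← P.part_eq_of_mem_part ih, P.mem_part_comm]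
    exact (prevInPart_eq_some_iff.1 hstep).1

theorem prevChain_of_mem_part {a b : α} (h : b ∈ P.part a) (hab : a ≤ b) :
    PrevChain P.prevInPart a b := by
  induction b using WellFoundedLT.induction with
  | _ b ih =>
    rcases hab.eq_or_lt with rfl | hab
    · exact .refl
    rw [P.mem_part_comm] at h
    -- `a` lies below `b` in its part, so the predecessor `c` of `b` satisfies `a ≤ c < b`.
    obtain ⟨c, hc⟩ := Option.ne_none_iff_exists'.1
      fun hnone => prevInPart_eq_none_iff.1 hnone a h hab
    obtain ⟨hcb, hlt, hmax⟩ := prevInPart_eq_some_iff.1 hc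
    have hca : c ∈ P.part a := by rwa [← P.part_eq_of_mem_part h] at hcb
    exact .tail (ih c hlt hca (hmax a h hab)) hc

theorem mem_part_iff_prevChain {a b : α} :
    b ∈ P.part a ↔ PrevChain P.prevInPart a b ∨ PrevChain P.prevInPart b a := by
  refine ⟨fun h => ?_, ?_⟩
  · rcases le_total a b with hab | hba
    · exact .inl (P.prevChain_of_mem_part h hab)
    · exact .inr (P.prevChain_of_mem_part (P.mem_part_comm.1 h) hba)
  · rintro (h | h)
    · exact P.mem_part_of_prevChain h
    · exact P.mem_part_comm.1 (P.mem_part_of_prevChain h)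

variable {p : α → Option α}

noncomputable def ofPrevFun (hp : IsPrevFun p) : Finpartition (univ : Finset α) :=
  letI := Classical.decRel hp.chainSetoid.r
  ofSetoid hp.chainSetoid

theorem mem_part_ofPrevFun (hp : IsPrevFun p) {a b : α} :
    b ∈ (ofPrevFun hp).part a ↔ PrevChain p a b ∨ PrevChain p b a :=
  letI := Classical.decRel hp.chainSetoid.r
  mem_part_ofSetoid_iff_rel

theorem prevInPart_ofPrevFun (hp : IsPrevFun p) : (ofPrevFun hp).prevInPart = p := by
  funext a
  rcases h : p a with _ | b
  · rw [prevInPart_eq_none_iff]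
    rintro c hc hca
    rcases (mem_part_ofPrevFun hp).1 hc with hac | hca'
    · exact (hp.le_of_prevChain hac).not_gt hca
    · rcases ReflTransGen.cases_tail hca' with rfl | ⟨d, -, hd⟩
      · exact hca.false
      · exact absurd (h ▸ hd) (by simp)
  · refine prevInPart_eq_some_iff.2 ⟨(mem_part_ofPrevFun hp).2 (.inr (.single h)), hp.lt h, ?_⟩
    rintro c hc hca
    rcases (mem_part_ofPrevFun hp).1 hc with hac | hca'
    · exact absurd (hp.le_of_prevChain hac) hca.not_ge
    · rcases ReflTransGen.cases_tail hca' with rfl | ⟨d, hcd, hd⟩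
      · exact absurd hca (lt_irrefl _)
      · exact hp.le_of_prevChain (Option.some_inj.1 (hd.symm.trans h) ▸ hcd)

theorem ofPrevFun_prevInPart : ofPrevFun P.isPrevFun_prevInPart = P :=
  part_injective <| funext fun a => Finset.ext fun b => by
    rw [mem_part_ofPrevFun, ← mem_part_iff_prevChain]

variable (α) in
noncomputable def equivPrevFun :
    Finpartition (univ : Finset α) ≃ {p : α → Option α // IsPrevFun p} where
  toFun P := ⟨P.prevInPart, P.isPrevFun_prevInPart⟩
  invFun p := ofPrevFun p.2
  left_inv P := P.ofPrevFun_prevInPart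
  right_inv p := Subtype.ext (prevInPart_ofPrevFun p.2)

theorem card_parts_eq_card_prevInPart_eq_none :
    #P.parts = #{a | P.prevInPart a = none} := by
  refine (card_nbij P.part (fun a _ => P.part_mem.2 (mem_univ a)) ?_ ?_).symm
  · intro a ha a' ha' h
    simp only [coe_filter, mem_univ, true_and, Set.mem_ofPred_eq, prevInPart_eq_none_iff]
      at ha ha'
    have ha'a : a' ∈ P.part a := h ▸ P.mem_part (mem_univ a')
    exact le_antisymm (not_lt.1 (ha a' ha'a)) (not_lt.1 (ha' a (P.mem_part_comm.1 ha'a)))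
  · intro t ht
    have hne := P.nonempty_of_mem_parts ht
    refine ⟨t.min' hne, ?_, P.part_eq_of_mem ht (t.min'_mem hne)⟩
    simp only [coe_filter, mem_univ, true_and, Set.mem_ofPred_eq, prevInPart_eq_none_iff,
      P.part_eq_of_mem ht (t.min'_mem hne)]
    exact fun c hc => (t.min'_le c hc).not_gt

end Finpartition

section StablePartition

variable {V : Type*} [Fintype V] [DecidableEq V] (G : SimpleGraph V)

open Classical in
theorem colS_eq_card (k : ℕ) :
    colS G k = #{P : Finpartition (univ : Finset V) | IsStablePartition G P ∧ #P.parts = k} := by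
  rw [colS, Set.ncard_eq_toFinset_card', Set.toFinset_ofPred]

theorem Finpartition.card_parts_mem_range_s13 (P : Finpartition (univ : Finset V)) :
    #P.parts ∈ range (Fintype.card V + 1) :=
  mem_range_succ_iff.2 P.card_parts_le_card

theorem colB_eq_natCard : colB G = Nat.card {P // IsStablePartition G P} := by
  classical
  rw [Nat.card_eq_fintype_card, Fintype.card_subtype,
    card_eq_sum_card_fiberwise fun P _ => P.card_parts_mem_range_s13, colB]
  simp only [colS_eq_card, filter_filter]

open Classical in
theorem colT_eq_sum : colT G = ∑ P : {P // IsStablePartition G P}, #P.1.parts := by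
  rw [(sum_subtype _ (fun _ => mem_filter_univ _) _ :
      ∑ P with IsStablePartition G P, #P.parts = _).symm,
    ← sum_fiberwise_of_maps_to fun P _ => P.card_parts_mem_range_s13, colT]
  refine sum_congr rfl fun k _ => ?_
  rw [colS_eq_card, sum_congr rfl fun P hP => (mem_filter.1 hP).2, sum_const, smul_eq_mul,
    mul_comm, filter_filter]

end StablePartition

section PathGraph

variable {m : ℕ}

def IsGapped {n : ℕ} (p : Fin n → Option (Fin n)) : Prop :=
  ∀ a b, p a = some b → b.val + 1 < a.val

def shiftPrev (p : Fin m → Option (Fin m)) : Fin (m + 1) → Option (Fin (m + 1)) :=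
  Fin.cons none fun b => (p b).map Fin.castSucc

theorem shiftPrev_injective : Function.Injective (shiftPrev (m := m)) := by
  intro p q h
  funext b
  have := congrFun h b.succ
  simp only [shiftPrev, Fin.cons_succ] at this
  exact Option.map_injective (Fin.castSucc_injective m) this

theorem shiftPrev_eq_some_iff {p : Fin m → Option (Fin m)} {a b : Fin (m + 1)} :
    shiftPrev p a = some b ↔ ∃ a' c, a = a'.succ ∧ b = c.castSucc ∧ p a' = some c := by
  cases a using Fin.cases <;> simp [shiftPrev, eq_comm, and_comm]

theorem isPrevFun_shiftPrev_and_isGapped_iff {p : Fin m → Option (Fin m)} :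
    IsPrevFun (shiftPrev p) ∧ IsGapped (shiftPrev p) ↔ IsPrevFun p := by
  refine ⟨fun ⟨hP, hG⟩ => ⟨fun h => ?_, fun h h' => ?_⟩,
    fun hp => ⟨⟨fun h => ?_, fun h h' => ?_⟩, fun a b h => ?_⟩⟩
  · have := hG _ _ (shiftPrev_eq_some_iff.2 ⟨_, _, rfl, rfl, h⟩)
    simp only [Fin.val_castSucc, Fin.val_succ] at this
    exact Fin.lt_def.2 (by omega)
  · exact Fin.succ_injective _ <| hP.inj (shiftPrev_eq_some_iff.2 ⟨_, _, rfl, rfl, h⟩)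
      (shiftPrev_eq_some_iff.2 ⟨_, _, rfl, rfl, h'⟩)
  · obtain ⟨a, c, rfl, rfl, hac⟩ := shiftPrev_eq_some_iff.1 h
    have := Fin.lt_def.1 (hp.lt hac)
    exact Fin.lt_def.2 (by simp only [Fin.val_castSucc, Fin.val_succ]; omega)
  · obtain ⟨a, c, rfl, rfl, hac⟩ := shiftPrev_eq_some_iff.1 h
    obtain ⟨a', c', rfl, hc, hac'⟩ := shiftPrev_eq_some_iff.1 h'
    obtain rfl := Fin.castSucc_injective m hc
    rw [hp.inj hac hac']
  · obtain ⟨a, c, rfl, rfl, hac⟩ := shiftPrev_eq_some_iff.1 h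
    have := Fin.lt_def.1 (hp.lt hac)
    simp only [Fin.val_castSucc, Fin.val_succ]
    omega

theorem exists_shiftPrev_eq {p : Fin (m + 1) → Option (Fin (m + 1))} (hp : IsGapped p) :
    ∃ q, shiftPrev q = p := by
  have key : ∀ b : Fin m, ∃ x : Option (Fin m), x.map Fin.castSucc = p b.succ := by
    intro b
    rcases h : p b.succ with _ | c
    · exact ⟨none, rfl⟩
    · have hc : c ≠ Fin.last m := by
        rintro rfl
        have := hp _ _ h
        simp at this
        omega
      exact ⟨some (c.castPred hc), by simp⟩
  choose q hq using key
  refine ⟨q, funext fun a => a.cases ?_ fun b => ?_⟩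
  · rcases h : p 0 with _ | c
    · rfl
    · exact absurd (hp _ _ h) (by simp)
  · simp [shiftPrev, hq]

theorem card_filter_shiftPrev_eq_none (p : Fin m → Option (Fin m)) :
    #{a | shiftPrev p a = none} = #{b | p b = none} + 1 := by
  rw [card_filter, card_filter, Fin.sum_univ_succ, add_comm]
  simp [shiftPrev]

/-- Adds `0` below `Fin m` shifted up by one: as a singleton part if `o = none`, and as the new
minimum of the part with minimum `a` if `o = some a`. -/
def consPrev (p : Fin m → Option (Fin m)) (o : Option (Fin m)) :
    Fin (m + 1) → Option (Fin (m + 1)) :=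
  Fin.cons none fun b => if o = some b then some 0 else (p b).map Fin.succ

theorem consPrev_succ_eq_some_zero_iff {p : Fin m → Option (Fin m)} {o : Option (Fin m)}
    {a : Fin m} : consPrev p o a.succ = some 0 ↔ o = some a := by
  by_cases h : o = some a <;> simp [consPrev, h, Fin.succ_ne_zero]

theorem consPrev_succ_eq_some_succ_iff {p : Fin m → Option (Fin m)} {o : Option (Fin m)}
    {a c : Fin m} : consPrev p o a.succ = some c.succ ↔ o ≠ some a ∧ p a = some c := by
  by_cases h : o = some a <;> simp [consPrev, h, (Fin.succ_ne_zero c).symm]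

theorem isPrevFun_consPrev {p : Fin m → Option (Fin m)} {o : Option (Fin m)} (hp : IsPrevFun p) :
    IsPrevFun (consPrev p o) := by
  have zero_ne : ∀ {b}, consPrev p o 0 ≠ some b := by simp [consPrev]
  refine ⟨fun {a b} h => ?_, fun {a a' b} h h' => ?_⟩
  · cases a using Fin.cases with
    | zero => exact absurd h zero_ne
    | succ a =>
      cases b using Fin.cases with
      | zero => exact Fin.succ_pos a
      | succ c => exact Fin.succ_lt_succ_iff.2 (hp.lt (consPrev_succ_eq_some_succ_iff.1 h).2)
  · cases a using Fin.cases with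
    | zero => exact absurd h zero_ne
    | succ a =>
      cases a' using Fin.cases with
      | zero => exact absurd h' zero_ne
      | succ a' =>
        congr 1
        cases b using Fin.cases with
        | zero =>
          exact Option.some_inj.1 ((consPrev_succ_eq_some_zero_iff.1 h).symm.trans
            (consPrev_succ_eq_some_zero_iff.1 h'))
        | succ c =>
          exact hp.inj (consPrev_succ_eq_some_succ_iff.1 h).2
            (consPrev_succ_eq_some_succ_iff.1 h').2

theorem consPrev_injective {p q : Fin m → Option (Fin m)} {o o' : Option (Fin m)}
    (hpo : ∀ a, o = some a → p a = none) (hqo : ∀ a, o' = some a → q a = none)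
    (h : consPrev p o = consPrev q o') : p = q ∧ o = o' := by
  obtain rfl : o = o' := Option.ext fun a => by
    rw [← consPrev_succ_eq_some_zero_iff, h, consPrev_succ_eq_some_zero_iff]
  refine ⟨funext fun b => ?_, rfl⟩
  by_cases hb : o = some b
  · rw [hpo b hb, hqo b hb]
  · have := congrFun h b.succ
    simp only [consPrev, Fin.cons_succ, if_neg hb] at this
    exact Option.map_injective (Fin.succ_injective _) this

theorem exists_consPrev_eq {p : Fin (m + 1) → Option (Fin (m + 1))} (hp : IsPrevFun p) :
    ∃ q o, IsPrevFun q ∧ (∀ a, o = some a → q a = none) ∧ consPrev q o = p := by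
  obtain ⟨o, ho⟩ : ∃ o : Option (Fin m), ∀ a : Fin m, o = some a ↔ p a.succ = some 0 := by
    by_cases h0 : ∃ a : Fin m, p a.succ = some 0
    · obtain ⟨a₀, ha₀⟩ := h0
      exact ⟨some a₀, fun a => ⟨fun h => Option.some_inj.1 h ▸ ha₀,
        fun h => congrArg some (Fin.succ_injective _ (hp.inj ha₀ h))⟩⟩
    · exact ⟨none, fun a => ⟨nofun, fun h => (h0 ⟨a, h⟩).elim⟩⟩
  have key : ∀ b : Fin m, ∃ x : Option (Fin m),
      x.map Fin.succ = if p b.succ = some 0 then none else p b.succ := by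
    intro b
    split_ifs with h0
    · exact ⟨none, rfl⟩
    rcases h : p b.succ with _ | c
    · exact ⟨none, rfl⟩
    · have hc : c ≠ 0 := fun hc => h0 (hc ▸ h)
      exact ⟨some (c.pred hc), by simp⟩
  choose q hq using key
  have hqo : ∀ a, o = some a → q a = none := fun a h => by
    simpa [(ho a).1 h] using hq a
  have hcons : consPrev q o = p := by
    funext a
    cases a using Fin.cases with
    | zero =>
      rcases h : p 0 with _ | c
      · rfl
      · exact absurd (hp.lt h) (Fin.not_lt_zero c)
    | succ b =>
      simp only [consPrev, Fin.cons_succ]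
      by_cases hb : o = some b
      · rw [if_pos hb, (ho b).1 hb]
      · rw [if_neg hb, hq b, if_neg (mt (ho b).2 hb)]
  have hstep : ∀ {b c}, q b = some c → p b.succ = some c.succ := fun {b c} h => by
    rw [← hcons, consPrev_succ_eq_some_succ_iff]
    exact ⟨fun hb => by simp [hqo b hb] at h, h⟩
  refine ⟨q, o, ⟨fun h => ?_, fun h h' => ?_⟩, hqo, hcons⟩
  · exact Fin.succ_lt_succ_iff.1 (hp.lt (hstep h))
  · exact Fin.succ_injective _ (hp.inj (hstep h) (hstep h'))

theorem isStablePartition_pathGraph_iff {n : ℕ} (P : Finpartition (univ : Finset (Fin n))) :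
    IsStablePartition (pathGraph n) P ↔ IsGapped P.prevInPart := by
  refine ⟨fun hP a b h => ?_, fun hP t ht u hu v hv hadj => ?_⟩
  · obtain ⟨hb, hba, -⟩ := prevInPart_eq_some_iff.1 h
    have := hP _ (P.part_mem.2 (mem_univ a)) _ hb _ (P.mem_part (mem_univ a))
    rw [pathGraph_adj] at this
    have := Fin.lt_def.1 hba
    omega
  · -- the predecessor `c` of `w` would satisfy `w - 1 ≤ c < w`, so `c + 1 = w`
    have key : ∀ u ∈ t, ∀ w ∈ t, u.val + 1 = w.val → False := by
      intro u hu w hw huw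
      have hpart : P.part w = t := P.part_eq_of_mem ht hw
      have huw' : u < w := Fin.lt_def.2 (by omega)
      obtain ⟨c, hc⟩ := Option.ne_none_iff_exists'.1 fun hnone =>
        prevInPart_eq_none_iff.1 hnone u (hpart ▸ hu) huw'
      have huc := Fin.le_def.1 ((prevInPart_eq_some_iff.1 hc).2.2 u (hpart ▸ hu) huw')
      have := hP _ _ hc
      omega
    rw [pathGraph_adj] at hadj
    exact hadj.elim (key u hu v hv) (key v hv u hu)

noncomputable def prevFunEquivGapped :
    {p : Fin m → Option (Fin m) // IsPrevFun p} ≃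
      {p : {p : Fin (m + 1) → Option (Fin (m + 1)) // IsPrevFun p} // IsGapped p.1} :=
  Equiv.ofBijective
    (fun p => ⟨⟨shiftPrev p.1, (isPrevFun_shiftPrev_and_isGapped_iff.2 p.2).1⟩,
      (isPrevFun_shiftPrev_and_isGapped_iff.2 p.2).2⟩)
    ⟨fun p q h => Subtype.ext (shiftPrev_injective (congrArg (·.1.1) h)),
      fun ⟨⟨p, hp⟩, hg⟩ => by
        obtain ⟨q, rfl⟩ := exists_shiftPrev_eq hg
        exact ⟨⟨q, isPrevFun_shiftPrev_and_isGapped_iff.1 ⟨hp, hg⟩⟩, rfl⟩⟩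

noncomputable def stablePathEquiv : Finpartition (univ : Finset (Fin m)) ≃
    {P : Finpartition (univ : Finset (Fin (m + 1))) // IsStablePartition (pathGraph (m + 1)) P} :=
  (equivPrevFun _).trans <| prevFunEquivGapped.trans <|
    ((equivPrevFun _).subtypeEquiv isStablePartition_pathGraph_iff).symm

theorem card_parts_stablePathEquiv (P : Finpartition (univ : Finset (Fin m))) :
    #(stablePathEquiv P).1.parts = #P.parts + 1 := by
  have h : (stablePathEquiv P).1.prevInPart = shiftPrev P.prevInPart := by
    simp [stablePathEquiv, equivPrevFun, prevFunEquivGapped, prevInPart_ofPrevFun]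
    rfl
  rw [card_parts_eq_card_prevInPart_eq_none, card_parts_eq_card_prevInPart_eq_none, h,
    card_filter_shiftPrev_eq_none]

noncomputable def markedPrevFunEquiv :
    (Σ p : {p : Fin m → Option (Fin m) // IsPrevFun p},
      {o : Option (Fin m) // ∀ a, o = some a → p.1 a = none}) ≃
      {p : Fin (m + 1) → Option (Fin (m + 1)) // IsPrevFun p} :=
  Equiv.ofBijective (fun x => ⟨consPrev x.1.1 x.2.1, isPrevFun_consPrev x.1.2⟩)
    ⟨fun x y h => by
      obtain ⟨hp, ho⟩ := consPrev_injective x.2.2 y.2.2 (congrArg Subtype.val h)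
      exact Sigma.subtype_ext (Subtype.ext hp) ho,
    fun p => by
      obtain ⟨q, o, hq, hqo, h⟩ := exists_consPrev_eq p.2
      exact ⟨⟨⟨q, hq⟩, ⟨o, hqo⟩⟩, Subtype.ext h⟩⟩

theorem bell_succ_eq_sum :
    bell (m + 1) = ∑ P : Finpartition (univ : Finset (Fin m)), (#P.parts + 1) := by
  classical
  have hcard : ∀ p : Fin m → Option (Fin m),
      Fintype.card {o : Option (Fin m) // ∀ a, o = some a → p a = none} =
        #{a | p a = none} + 1 := by
    intro p
    rw [Fintype.card_subtype, card_filter, card_filter, Fintype.sum_option, add_comm]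
    simp
  rw [bell, Nat.card_congr ((equivPrevFun _).trans markedPrevFunEquiv.symm),
    Nat.card_eq_fintype_card, Fintype.card_sigma]
  refine (Fintype.sum_equiv (equivPrevFun _) _ _ fun P => ?_).symm
  rw [hcard, card_parts_eq_card_prevInPart_eq_none]
  rfl

theorem colB_pathGraph_succ : colB (pathGraph (m + 1)) = bell m := by
  rw [colB_eq_natCard, ← Nat.card_congr stablePathEquiv, bell]

theorem colT_pathGraph_succ : colT (pathGraph (m + 1)) = bell (m + 1) := by
  classical
  rw [colT_eq_sum, bell_succ_eq_sum]
  exact (Fintype.sum_equiv stablePathEquiv _ _ fun P => (card_parts_stablePathEquiv P).symm).symm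

end PathGraph

theorem stmt13 (n : ℕ) (hn : 1 ≤ n) :
    colA (SimpleGraph.pathGraph n) = (bell n : ℚ) / (bell (n - 1) : ℚ) := by
  obtain ⟨m, rfl⟩ : ∃ m, n = m + 1 := ⟨n - 1, by omega⟩
  rw [colA, colT_pathGraph_succ, colB_pathGraph_succ, Nat.add_sub_cancel]
end
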